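/- Let T form a wandering N-gon under f(z) = z^d. If q is a wandering N-gon's critical leaf (a critical chord in the limit set ℒ_ω(T)), then q is disjoint from CH(T_i) for every i ≥ 0. -/

import Mathlib

open MeasureTheory Set Metric Filter Topology

noncomputable section

abbrev S1 := AddCircle (1 : ℝ)

def fd (d : ℕ) : S1 → S1 := fun x => d • x

def len (A : Set S1) : ℝ := (volume A).toReal

def IsHole (B H : Set S1) : Prop := ∃ x ∈ Bᶜ, H = connectedComponentIn Bᶜ x

def openArc (u w : S1) : Set S1 := {x | SBtw.sbtw u x w}

def OrientPresOn (g : S1 → S1) (B : Set S1) : Prop :=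
  Set.InjOn g B ∧ ∀ a ∈ B, ∀ b ∈ B, ∀ c ∈ B, SBtw.sbtw a b c → SBtw.sbtw (g a) (g b) (g c)

def emb (x : S1) : ℂ := (AddCircle.toCircle x : ℂ)

def chord (a b : S1) : Set ℂ := segment ℝ (emb a) (emb b)

def CH (A : Set S1) : Set ℂ := convexHull ℝ (emb '' A)

def Wandering (d N : ℕ) (T : Set S1) : Prop :=
  ∀ i j : ℕ, ((fd d)^[i] '' T).ncard = N ∧
    (i ≠ j → Disjoint (CH ((fd d)^[i] '' T)) (CH ((fd d)^[j] '' T)))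

def IsHoleEnum (B : Set S1) {N : ℕ} (H : Fin N → Set S1) : Prop :=
  Function.Injective H ∧ (∀ k, IsHole B (H k)) ∧ (∀ G, IsHole B G → ∃ k, H k = G) ∧
  ∀ k l : Fin N, k ≤ l → len (H k) ≤ len (H l)

def rem (d : ℕ) (s : ℝ) : ℝ := s - (⌊(d : ℝ) * s⌋ : ℝ) / d

def ImageHoleRel (g : S1 → S1) (H K : Set S1) : Prop :=
  ∃ u w : S1, u ≠ w ∧ H = openArc u w ∧ K = openArc (g u) (g w)

def InLimitSet (d : ℕ) (T : Set S1) (a b : S1) : Prop :=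
  ∃ φ : ℕ → ℕ, StrictMono φ ∧ ∃ u v : ℕ → S1,
    (∀ n, u n ∈ (fd d)^[φ n] '' T ∧ v n ∈ (fd d)^[φ n] '' T) ∧
    Tendsto (fun n => hausdorffDist (chord (u n) (v n)) (chord a b)) atTop (nhds 0)

/-!
Let `u n, v n` be leaves of the polygons `T_{φ n}` converging to the critical leaf `a b`.
The line through `a b` meets the circle only at `a` and `b`. So if a polygon `T_i` met the chord
`a b` without having `a` or `b` as a vertex, it would have vertices strictly on both sides of
that line, and the leaves `u n v n` would eventually cross it.

It remains to see that `a` (and likewise `b`) is not a vertex of `T_i`. The leaves `u n v n`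
are pairwise disjoint, which forces their endpoints to approach `a` and `b` from opposite
sides, since two leaves whose endpoints moved the same way would cross. As `f a = f b`, the
image leaves `f (u n) f (v n)` then straddle `f a`, and for large `n` they cross the edge of
`T_{i+1}` joining `f a` to any other vertex.
-/

open Complex

/-- Twice the signed area of the triangle `u w z`: positive iff `z` lies to the left of the
directed line from `u` to `w`. -/
def orient (u w z : ℂ) : ℝ := (w.re - u.re) * (z.im - u.im) - (w.im - u.im) * (z.re - u.re)

lemma orient_swap (u w z : ℂ) : orient w u z = -orient u w z := by
  simp only [orient]; ring

lemma orient_swap_right (u w z : ℂ) : orient u z w = -orient u w z := by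
  simp only [orient]; ring

lemma orient_smul_add_smul (u w p q : ℂ) {a b : ℝ} (hab : a + b = 1) :
    orient u w (a • p + b • q) = a * orient u w p + b * orient u w q := by
  simp only [orient, add_re, add_im, real_smul, mul_re, mul_im, ofReal_re, ofReal_im]
  linear_combination (w.re * u.im - u.re * w.im) * hab

lemma orient_add_smul_sub (u w : ℂ) (t : ℝ) : orient u w (u + t • (w - u)) = 0 := by
  simp only [orient, add_re, add_im, sub_re, sub_im, real_smul, mul_re, mul_im, ofReal_re,
    ofReal_im]
  ring

lemma orient_eq_zero_of_mem_segment {u w z : ℂ} (hz : z ∈ segment ℝ u w) : orient u w z = 0 := by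
  obtain ⟨t, -, rfl⟩ := (segment_eq_image' ℝ u w).subset hz
  exact orient_add_smul_sub u w t

lemma continuous_orient (z : ℂ) : Continuous fun P : ℂ × ℂ => orient P.1 P.2 z := by
  unfold orient; fun_prop

lemma convex_setOf_orient_neg (u w : ℂ) : Convex ℝ {z | orient u w z < 0} := by
  intro p hp q hq a b ha hb hab
  simp only [mem_ofPred_eq, orient_smul_add_smul u w p q hab] at hp hq ⊢
  nlinarith [mul_le_mul_of_nonneg_left (le_max_left (orient u w p) (orient u w q)) ha,
    mul_le_mul_of_nonneg_left (le_max_right (orient u w p) (orient u w q)) hb, max_lt hp hq]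

lemma orient_neg_of_mem_convexHull {u w z : ℂ} {A : Set ℂ} (hA : ∀ p ∈ A, orient u w p < 0)
    (hz : z ∈ convexHull ℝ A) : orient u w z < 0 :=
  convexHull_min hA (convex_setOf_orient_neg u w) hz

lemma exists_eq_add_smul_sub_of_orient_eq_zero {u w z : ℂ} (hne : u ≠ w)
    (h : orient u w z = 0) : ∃ t : ℝ, z = u + t • (w - u) := by
  have hn : (w.re - u.re) ^ 2 + (w.im - u.im) ^ 2 ≠ 0 := by
    intro h0
    apply hne
    apply Complex.ext <;> nlinarith [sq_nonneg (w.re - u.re), sq_nonneg (w.im - u.im)]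
  refine ⟨((w.re - u.re) * (z.re - u.re) + (w.im - u.im) * (z.im - u.im)) /
    ((w.re - u.re) ^ 2 + (w.im - u.im) ^ 2), ?_⟩
  unfold orient at h
  apply Complex.ext <;>
    simp only [add_re, add_im, sub_re, sub_im, real_smul, mul_re, mul_im, ofReal_re, ofReal_im] <;>
    field_simp
  · linear_combination (u.im - w.im) * h
  · linear_combination (w.re - u.re) * h

lemma normSq_add_smul_sub {u w : ℂ} (hu : ‖u‖ = 1) (hw : ‖w‖ = 1) (t : ℝ) :
    normSq (u + t • (w - u)) = 1 + (t ^ 2 - t) * normSq (w - u) := by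
  have hu' : normSq u = 1 := by rw [← Complex.sq_norm, hu, one_pow]
  have hw' : normSq w = 1 := by rw [← Complex.sq_norm, hw, one_pow]
  simp only [normSq_apply, add_re, add_im, sub_re, sub_im, real_smul, mul_re, mul_im,
    ofReal_re, ofReal_im] at hu' hw' ⊢
  linear_combination (1 - t) * hu' + t * hw'

lemma mem_segment_of_orient_eq_zero {u w z : ℂ} (hu : ‖u‖ = 1) (hw : ‖w‖ = 1) (hne : u ≠ w)
    (h : orient u w z = 0) (hz : ‖z‖ ≤ 1) : z ∈ segment ℝ u w := by
  obtain ⟨t, rfl⟩ := exists_eq_add_smul_sub_of_orient_eq_zero hne h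
  have hpos : 0 < normSq (w - u) := normSq_pos.mpr (sub_ne_zero.mpr hne.symm)
  have hle : normSq (u + t • (w - u)) ≤ 1 := by
    rw [← Complex.sq_norm]; nlinarith [norm_nonneg (u + t • (w - u))]
  rw [normSq_add_smul_sub hu hw] at hle
  have ht : t ^ 2 - t ≤ 0 := by nlinarith
  rw [segment_eq_image']
  exact ⟨t, ⟨by nlinarith, by nlinarith⟩, rfl⟩

lemma eq_or_eq_of_orient_eq_zero {u w z : ℂ} (hu : ‖u‖ = 1) (hw : ‖w‖ = 1) (hz : ‖z‖ = 1)
    (hne : u ≠ w) (h : orient u w z = 0) : z = u ∨ z = w := by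
  obtain ⟨t, rfl⟩ := exists_eq_add_smul_sub_of_orient_eq_zero hne h
  have hpos : 0 < normSq (w - u) := normSq_pos.mpr (sub_ne_zero.mpr hne.symm)
  have h1 : normSq (u + t • (w - u)) = 1 := by rw [← Complex.sq_norm, hz, one_pow]
  rw [normSq_add_smul_sub hu hw] at h1
  have ht : t * (t - 1) = 0 := by nlinarith
  rcases mul_eq_zero.mp ht with ht | ht
  · left; simp [ht]
  · right; simp [sub_eq_zero.mp ht]

lemma eq_or_eq_of_mem_segment_of_norm_eq_one {u w z : ℂ} (hu : ‖u‖ = 1) (hw : ‖w‖ = 1)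
    (hz : z ∈ segment ℝ u w) (hz1 : ‖z‖ = 1) : z = u ∨ z = w := by
  rcases eq_or_ne u w with rfl | hne
  · rw [segment_same] at hz
    exact Or.inl hz
  · exact eq_or_eq_of_orient_eq_zero hu hw hz1 hne (orient_eq_zero_of_mem_segment hz)

lemma segment_inter_nonempty_of_orient {u w p q : ℂ} (hu : ‖u‖ = 1) (hw : ‖w‖ = 1)
    (hp : ‖p‖ ≤ 1) (hq : ‖q‖ ≤ 1) (hp' : orient u w p < 0) (hq' : 0 < orient u w q) :
    (segment ℝ p q ∩ segment ℝ u w).Nonempty := by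
  have hne : u ≠ w := by
    rintro rfl
    simp [orient] at hp'
  set A := orient u w p
  set B := orient u w q
  have hAB : A - B < 0 := by linarith
  -- the parameter at which the segment `p q` meets the line `u w`
  set t := A / (A - B)
  have ht0 : 0 ≤ t := div_nonneg_of_nonpos hp'.le hAB.le
  have ht1 : t ≤ 1 := (div_le_one_of_neg hAB).mpr (by linarith)
  have hz : (1 - t) • p + t • q ∈ segment ℝ p q := ⟨1 - t, t, by linarith, ht0, by ring, rfl⟩
  refine ⟨_, hz, mem_segment_of_orient_eq_zero hu hw hne ?_ ?_⟩
  · rw [orient_smul_add_smul u w p q (by ring)]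
    change (1 - t) * A + t * B = 0
    simp only [t]
    field_simp [hAB.ne]
    ring
  · exact mem_closedBall_zero_iff.mp <| (convex_closedBall (0 : ℂ) 1).segment_subset
      (mem_closedBall_zero_iff.mpr hp) (mem_closedBall_zero_iff.mpr hq) hz

open Real in
lemma emb_coe (t : ℝ) : emb (t : S1) = exp (↑(2 * π * t) * I) := by
  rw [emb, AddCircle.toCircle_apply_mk, Circle.coe_exp, div_one]

lemma norm_emb (x : S1) : ‖emb x‖ = 1 := Circle.norm_coe _

lemma emb_injective : Function.Injective emb :=
  fun _ _ h => AddCircle.injective_toCircle one_ne_zero (Subtype.ext h)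

lemma continuous_emb : Continuous emb :=
  continuous_subtype_val.comp AddCircle.continuous_toCircle

lemma fd_coe (d : ℕ) (t : ℝ) : fd d (t : S1) = ((d * t : ℝ) : S1) := by
  rw [fd, ← AddCircle.coe_nsmul, nsmul_eq_mul]

lemma chord_comm (a b : S1) : chord a b = chord b a := segment_symm ℝ _ _

lemma orient_exp_mul_I (x y z : ℝ) :
    orient (exp (x * I)) (exp (y * I)) (exp (z * I)) =
      Real.sin (y - x) + Real.sin (z - y) - Real.sin (z - x) := by
  simp only [orient, exp_ofReal_mul_I_re, exp_ofReal_mul_I_im, Real.sin_sub]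
  ring

lemma sin_add_sin_sub_sin_add (A B : ℝ) :
    Real.sin A + Real.sin B - Real.sin (A + B) =
      4 * Real.sin (A / 2) * Real.sin (B / 2) * Real.sin ((A + B) / 2) := by
  have hA : A = 2 * (A / 2) := by ring
  have hB : B = 2 * (B / 2) := by ring
  set a := A / 2
  set b := B / 2
  rw [hA, hB, show (2 * a + 2 * b) / 2 = a + b by ring, ← mul_add, Real.sin_two_mul,
    Real.sin_two_mul, Real.sin_two_mul, Real.cos_add, Real.sin_add]
  linear_combination (-2 * Real.sin b * Real.cos b) * Real.sin_sq_add_cos_sq a -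
    2 * Real.sin a * Real.cos a * Real.sin_sq_add_cos_sq b

open Real in
lemma orient_emb_pos {r s t : ℝ} (hrs : r < s) (hst : s < t) (htr : t < r + 1) :
    0 < orient (emb r) (emb s) (emb t) := by
  have hsin : ∀ x : ℝ, 0 < x → x < 1 → 0 < Real.sin (π * x) := fun x h0 h1 =>
    Real.sin_pos_of_pos_of_lt_pi (by positivity) (by nlinarith [Real.pi_pos])
  rw [emb_coe, emb_coe, emb_coe, orient_exp_mul_I]
  have hfactor := sin_add_sin_sub_sin_add (2 * π * s - 2 * π * r) (2 * π * t - 2 * π * s)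
  rw [show 2 * π * s - 2 * π * r + (2 * π * t - 2 * π * s) = 2 * π * t - 2 * π * r by ring]
    at hfactor
  rw [hfactor, show (2 * π * s - 2 * π * r) / 2 = π * (s - r) by ring,
    show (2 * π * t - 2 * π * s) / 2 = π * (t - s) by ring,
    show (2 * π * t - 2 * π * r) / 2 = π * (t - r) by ring]
  have h₁ := hsin (s - r) (by linarith) (by linarith)
  have h₂ := hsin (t - s) (by linarith) (by linarith)
  have h₃ := hsin (t - r) (by linarith) (by linarith)
  positivity

lemma chord_inter_nonempty_of_lt {a b c e : ℝ} (hab : a < b) (hbc : b < c) (hce : c < e)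
    (hea : e < a + 1) : (chord a c ∩ chord b e).Nonempty := by
  rw [Set.inter_comm]
  refine segment_inter_nonempty_of_orient (norm_emb _) (norm_emb _) (norm_emb _).le
    (norm_emb _).le ?_ (orient_emb_pos (by linarith) hce (by linarith))
  rw [orient_swap_right]
  exact neg_neg_of_pos (orient_emb_pos hab hbc (by linarith))

lemma chord_inter_nonempty_of_mul_pos {α β r x y x' y' : ℝ} (hr : 2 * r ≤ β - α)
    (hr' : 2 * r ≤ α + 1 - β) (hx : |x - α| < r) (hx' : |x' - α| < r) (hy : |y - β| < r)
    (hy' : |y' - β| < r) (h : 0 < (x' - x) * (y' - y)) :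
    (chord x y ∩ chord x' y').Nonempty := by
  rw [abs_lt] at hx hx' hy hy'
  rcases lt_or_gt_of_ne (show x ≠ x' by rintro rfl; simp at h) with hxx | hxx
  · have hyy : 0 < y' - y := (pos_iff_pos_of_mul_pos h).mp (sub_pos.mpr hxx)
    exact chord_inter_nonempty_of_lt hxx (by linarith) (by linarith) (by linarith)
  · have hyy : y' - y < 0 := (neg_iff_neg_of_mul_pos h).mp (sub_neg.mpr hxx)
    rw [Set.inter_comm]
    exact chord_inter_nonempty_of_lt hxx (by linarith) (by linarith) (by linarith)

lemma chord_inter_nonempty_of_mul_nonpos {p σ e e' : ℝ} (hσ : σ ∈ Ioo p (p + 1))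
    (he : |e| < min (σ - p) (p + 1 - σ)) (he' : |e'| < min (σ - p) (p + 1 - σ))
    (h : e * e' ≤ 0) : (chord ↑(p + e) ↑(p + e') ∩ chord ↑p ↑σ).Nonempty := by
  rw [lt_min_iff, abs_lt, abs_lt] at he he'
  obtain ⟨hσ₁, hσ₂⟩ := hσ
  by_cases hzero : e = 0 ∨ e' = 0
  · refine ⟨emb p, ?_, left_mem_segment ℝ _ _⟩
    rcases hzero with rfl | rfl
    · rw [add_zero]; exact left_mem_segment ℝ _ _
    · rw [add_zero]; exact right_mem_segment ℝ _ _
  rw [not_or] at hzero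
  rcases lt_or_gt_of_ne hzero.1 with he0 | he0
  · have he'0 : 0 < e' := lt_of_le_of_ne (nonneg_of_mul_nonpos_right h he0) (Ne.symm hzero.2)
    exact chord_inter_nonempty_of_lt (by linarith) (by linarith) (by linarith) (by linarith)
  · have he'0 : e' < 0 := lt_of_le_of_ne (nonpos_of_mul_nonpos_right h he0) hzero.2
    rw [chord_comm]
    exact chord_inter_nonempty_of_lt (by linarith) (by linarith) (by linarith) (by linarith)

lemma eventually_mul_nonpos_of_pairwise_disjoint {α β : ℝ} (hβ : β ∈ Ioo α (α + 1))
    {x y : ℕ → ℝ} (hx : Tendsto x atTop (𝓝 α)) (hy : Tendsto y atTop (𝓝 β))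
    (hdisj : Pairwise fun m n => Disjoint (chord (x m) (y m)) (chord (x n) (y n))) :
    ∀ᶠ n in atTop, (x n - α) * (y n - β) ≤ 0 := by
  obtain ⟨hβ₁, hβ₂⟩ := hβ
  obtain ⟨r, hr, hrβ, hrα⟩ : ∃ r : ℝ, 0 < r ∧ 2 * r ≤ β - α ∧ 2 * r ≤ α + 1 - β :=
    ⟨min (β - α) (α + 1 - β) / 2, half_pos (lt_min (by linarith) (by linarith)),
      by linarith [min_le_left (β - α) (α + 1 - β)],
      by linarith [min_le_right (β - α) (α + 1 - β)]⟩
  have hsmall : ∀ᶠ n in atTop, |x n - α| < r ∧ |y n - β| < r :=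
    (Metric.tendsto_nhds.mp hx r hr).and (Metric.tendsto_nhds.mp hy r hr)
  by_contra hfreq
  obtain ⟨n₀, hpos₀, hsmall₀⟩ :=
    ((not_eventually.mp hfreq).and_eventually hsmall).exists
  rw [not_le] at hpos₀
  have hpos : ∀ᶠ n in atTop, 0 < (x n - x n₀) * (y n - y n₀) := by
    have hlim : Tendsto (fun n => (x n - x n₀) * (y n - y n₀)) atTop
        (𝓝 ((α - x n₀) * (β - y n₀))) := (hx.sub_const _).mul (hy.sub_const _)
    exact hlim.eventually (lt_mem_nhds (by nlinarith))
  obtain ⟨n, hn, hposn, hsmalln⟩ :=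
    ((eventually_ne_atTop n₀).and (hpos.and hsmall)).exists
  refine Set.not_disjoint_iff_nonempty_inter.mpr ?_ (hdisj hn.symm)
  exact chord_inter_nonempty_of_mul_pos hrβ hrα hsmall₀.1 hsmalln.1 hsmall₀.2 hsmalln.2
    hposn

section Segment

variable {E : Type*} [NormedAddCommGroup E] [NormedSpace ℝ E]

lemma isCompact_segment (p q : E) : IsCompact (segment ℝ p q) := by
  rw [segment_eq_image]
  exact isCompact_Icc.image (by fun_prop)

lemma hausdorffDist_segment_le (p q p' q' : E) :
    hausdorffDist (segment ℝ p q) (segment ℝ p' q') ≤ max (dist p p') (dist q q') := by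
  have hnear : ∀ p q p' q' : E, ∀ z ∈ segment ℝ p q,
      ∃ z' ∈ segment ℝ p' q', dist z z' ≤ max (dist p p') (dist q q') := by
    rintro p q p' q' _ ⟨s, t, hs, ht, hst, rfl⟩
    refine ⟨s • p' + t • q', ⟨s, t, hs, ht, hst, rfl⟩, ?_⟩
    calc dist (s • p + t • q) (s • p' + t • q')
        ≤ dist (s • p) (s • p') + dist (t • q) (t • q') := dist_add_add_le _ _ _ _
      _ = s * dist p p' + t * dist q q' := by
        rw [dist_smul₀, dist_smul₀, Real.norm_of_nonneg hs, Real.norm_of_nonneg ht]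
      _ ≤ s * max (dist p p') (dist q q') + t * max (dist p p') (dist q q') := by
        gcongr
        exacts [le_max_left _ _, le_max_right _ _]
      _ = max (dist p p') (dist q q') := by rw [← add_mul, hst, one_mul]
  refine hausdorffDist_le_of_mem_dist (le_max_of_le_left dist_nonneg) (hnear p q p' q') ?_
  intro z hz
  simpa only [dist_comm p', dist_comm q'] using hnear p' q' p q z hz

lemma segment_eq_of_tendsto_hausdorffDist {ι : Type*} {l : Filter ι} [l.NeBot] {p q : ι → E}
    {p₀ q₀ a b : E} (hp : Tendsto p l (𝓝 p₀)) (hq : Tendsto q l (𝓝 q₀))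
    (h : Tendsto (fun n => hausdorffDist (segment ℝ (p n) (q n)) (segment ℝ a b)) l (𝓝 0)) :
    segment ℝ p₀ q₀ = segment ℝ a b := by
  have hfin : ∀ x y x' y' : E, hausdorffEDist (segment ℝ x y) (segment ℝ x' y') ≠ ⊤ :=
    fun x y x' y' => hausdorffEDist_ne_top_of_nonempty_of_bounded
      ⟨x, left_mem_segment ℝ x y⟩ ⟨x', left_mem_segment ℝ x' y'⟩
      (isCompact_segment x y).isBounded (isCompact_segment x' y').isBounded
  have hbound : ∀ n, hausdorffDist (segment ℝ p₀ q₀) (segment ℝ a b) ≤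
      max (dist p₀ (p n)) (dist q₀ (q n)) + hausdorffDist (segment ℝ (p n) (q n)) (segment ℝ a b) :=
    fun n => (hausdorffDist_triangle (hfin _ _ _ _)).trans
      (add_le_add_left (hausdorffDist_segment_le _ _ _ _) _)
  have hlim : Tendsto (fun n => max (dist p₀ (p n)) (dist q₀ (q n)) +
      hausdorffDist (segment ℝ (p n) (q n)) (segment ℝ a b)) l (𝓝 0) := by
    have hp' : Tendsto (fun n => dist p₀ (p n)) l (𝓝 0) := by
      simpa using (tendsto_const_nhds (x := p₀)).dist hp
    have hq' : Tendsto (fun n => dist q₀ (q n)) l (𝓝 0) := by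
      simpa using (tendsto_const_nhds (x := q₀)).dist hq
    simpa using (hp'.max hq').add h
  have hzero : hausdorffDist (segment ℝ p₀ q₀) (segment ℝ a b) = 0 :=
    le_antisymm (ge_of_tendsto hlim (Eventually.of_forall hbound)) hausdorffDist_nonneg
  exact ((isCompact_segment p₀ q₀).isClosed.hausdorffDist_zero_iff_eq
    (isCompact_segment a b).isClosed (hfin _ _ _ _)).mp hzero

end Segment

lemma eq_and_eq_or_of_chord_eq {a b x y : S1} (hab : a ≠ b) (h : chord x y = chord a b) :
    (x = a ∧ y = b) ∨ (x = b ∧ y = a) := by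
  have ha : emb a ∈ chord x y := h ▸ left_mem_segment ℝ _ _
  have hb : emb b ∈ chord x y := h ▸ right_mem_segment ℝ _ _
  rcases (eq_or_eq_of_mem_segment_of_norm_eq_one (norm_emb x) (norm_emb y) ha
    (norm_emb a)).imp (fun h => emb_injective h) (fun h => emb_injective h) with hax | hay <;>
  rcases (eq_or_eq_of_mem_segment_of_norm_eq_one (norm_emb x) (norm_emb y) hb
    (norm_emb b)).imp (fun h => emb_injective h) (fun h => emb_injective h) with hbx | hby
  · exact absurd (hax.trans hbx.symm) hab
  · exact Or.inl ⟨hax.symm, hby.symm⟩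
  · exact Or.inr ⟨hbx.symm, hay.symm⟩
  · exact absurd (hay.trans hby.symm) hab

lemma InLimitSet.exists_tendsto {d : ℕ} {T : Set S1} {a b : S1} (hab : a ≠ b)
    (h : InLimitSet d T a b) :
    ∃ φ : ℕ → ℕ, StrictMono φ ∧ ∃ u v : ℕ → S1,
      (∀ n, u n ∈ (fd d)^[φ n] '' T ∧ v n ∈ (fd d)^[φ n] '' T) ∧
      Tendsto u atTop (𝓝 a) ∧ Tendsto v atTop (𝓝 b) := by
  obtain ⟨φ, hφ, u, v, hmem, hlim⟩ := h
  obtain ⟨⟨x, y⟩, -, ψ, hψ, hxy⟩ :=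
    isCompact_univ.tendsto_subseq (x := fun n => (u n, v n)) fun _ => mem_univ _
  have hu : Tendsto (u ∘ ψ) atTop (𝓝 x) := (continuous_fst.tendsto _).comp hxy
  have hv : Tendsto (v ∘ ψ) atTop (𝓝 y) := (continuous_snd.tendsto _).comp hxy
  have hchord : chord x y = chord a b :=
    segment_eq_of_tendsto_hausdorffDist ((continuous_emb.tendsto x).comp hu)
      ((continuous_emb.tendsto y).comp hv) (hlim.comp hψ.tendsto_atTop)
  rcases eq_and_eq_or_of_chord_eq hab hchord with ⟨rfl, rfl⟩ | ⟨rfl, rfl⟩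
  · exact ⟨φ ∘ ψ, hφ.comp hψ, u ∘ ψ, v ∘ ψ, fun n => hmem (ψ n), hu, hv⟩
  · exact ⟨φ ∘ ψ, hφ.comp hψ, v ∘ ψ, u ∘ ψ, fun n => (hmem (ψ n)).symm, hv, hu⟩

lemma exists_coe_eq_mem_Ioo {x : S1} {c : ℝ} (h : x ≠ c) :
    ∃ t ∈ Ioo c (c + 1), (t : S1) = x := by
  have ht : ((AddCircle.equivIco 1 c x : ℝ) : S1) = x :=
    (AddCircle.equivIco 1 c).symm_apply_apply x
  obtain ⟨hc, hc'⟩ := (AddCircle.equivIco 1 c x).2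
  refine ⟨_, ⟨lt_of_le_of_ne hc fun hceq => h ?_, hc'⟩, ht⟩
  rw [← ht, ← hceq]

lemma exists_lift_tendsto {ι : Type*} {l : Filter ι} {x : ι → S1} {α : ℝ}
    (hx : Tendsto x l (𝓝 (α : S1))) :
    ∃ r : ι → ℝ, (∀ n, (r n : S1) = x n) ∧ Tendsto r l (𝓝 α) := by
  have hα : α ∈ Ico (α - 1 / 2) (α - 1 / 2 + 1) := ⟨by linarith, by linarith⟩
  have hne : (α : S1) ≠ ((α - 1 / 2 : ℝ) : S1) := fun h => by
    have := (AddCircle.coe_eq_coe_iff_of_mem_Ico hα ⟨le_rfl, by linarith⟩).mp h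
    linarith
  -- `equivIco` is continuous away from its base point, here chosen antipodal to `α`
  have hcont := (AddCircle.continuousAt_equivIco 1 _ hne).tendsto.comp hx
  rw [AddCircle.equivIco_coe_eq hα] at hcont
  exact ⟨fun n => AddCircle.equivIco 1 (α - 1 / 2) (x n),
    fun n => (AddCircle.equivIco 1 _).symm_apply_apply (x n),
    (continuous_subtype_val.tendsto _).comp hcont⟩

lemma chord_fd_inter_nonempty {d : ℕ} (hd : 0 < d) {α β σ x y : ℝ}
    (hcr : ((d * α : ℝ) : S1) = ((d * β : ℝ) : S1)) (hσ : σ ∈ Ioo (d * α) (d * α + 1))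
    (hx : |x - α| < min (σ - d * α) (d * α + 1 - σ) / d)
    (hy : |y - β| < min (σ - d * α) (d * α + 1 - σ) / d) (h : (x - α) * (y - β) ≤ 0) :
    (chord (fd d x) (fd d y) ∩ chord ↑(d * α) ↑σ).Nonempty := by
  have hdR : (0 : ℝ) < d := by exact_mod_cast hd
  have hscale : ∀ {r : ℝ}, |r| < min (σ - d * α) (d * α + 1 - σ) / d →
      |d * r| < min (σ - d * α) (d * α + 1 - σ) := fun hr => by
    rw [abs_mul, Nat.abs_cast]
    exact (lt_div_iff₀' hdR).mp hr
  have hxu : fd d x = ((d * α + d * (x - α) : ℝ) : S1) := by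
    rw [fd_coe]; congr 1; ring
  have hyv : fd d y = ((d * α + d * (y - β) : ℝ) : S1) := by
    rw [AddCircle.coe_add, hcr, ← AddCircle.coe_add, fd_coe]; congr 1; ring
  rw [hxu, hyv]
  exact chord_inter_nonempty_of_mul_nonpos hσ (hscale hx) (hscale hy)
    (by nlinarith [sq_nonneg (d : ℝ)])

lemma emb_mem_CH {A : Set S1} {x : S1} (hx : x ∈ A) : emb x ∈ CH A :=
  subset_convexHull ℝ _ (mem_image_of_mem emb hx)

lemma chord_subset_CH {A : Set S1} {x y : S1} (hx : x ∈ A) (hy : y ∈ A) : chord x y ⊆ CH A :=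
  (convex_convexHull ℝ _).segment_subset (emb_mem_CH hx) (emb_mem_CH hy)

lemma disjoint_chord_CH_of_orient_neg {A : Set S1} {a b : S1}
    (h : ∀ s ∈ A, orient (emb a) (emb b) (emb s) < 0) : Disjoint (chord a b) (CH A) := by
  refine Set.disjoint_left.mpr fun z hz hzA => ?_
  have hneg := orient_neg_of_mem_convexHull (by rintro _ ⟨s, hs, rfl⟩; exact h s hs) hzA
  rw [orient_eq_zero_of_mem_segment hz] at hneg
  exact lt_irrefl 0 hneg

lemma fd_mem_iterate_succ_image {d j : ℕ} {T : Set S1} {x : S1} (hx : x ∈ (fd d)^[j] '' T) :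
    fd d x ∈ (fd d)^[j + 1] '' T := by
  obtain ⟨y, hy, rfl⟩ := hx
  exact ⟨y, hy, Function.iterate_succ_apply' _ _ _⟩

namespace Wandering

variable {d N : ℕ} {T : Set S1} {φ : ℕ → ℕ} {u v : ℕ → S1} {a b : S1}

lemma eq_of_mem_CH (hw : Wandering d N T) {j k : ℕ} {z : ℂ} (hj : z ∈ CH ((fd d)^[j] '' T))
    (hk : z ∈ CH ((fd d)^[k] '' T)) : j = k := by
  by_contra hjk
  exact Set.disjoint_left.mp ((hw j k).2 hjk) hj hk

lemma orient_nonpos_of_orient_neg (hw : Wandering d N T) (hφ : StrictMono φ)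
    (hmem : ∀ n, u n ∈ (fd d)^[φ n] '' T ∧ v n ∈ (fd d)^[φ n] '' T)
    (hu : Tendsto u atTop (𝓝 a)) (hv : Tendsto v atTop (𝓝 b)) {i : ℕ} {s t : S1}
    (hs : s ∈ (fd d)^[i] '' T) (ht : t ∈ (fd d)^[i] '' T)
    (hs' : orient (emb a) (emb b) (emb s) < 0) : orient (emb a) (emb b) (emb t) ≤ 0 := by
  by_contra! ht'
  have hlim : Tendsto (fun n => (emb (u n), emb (v n))) atTop (𝓝 (emb a, emb b)) :=
    ((continuous_emb.tendsto a).comp hu).prodMk_nhds ((continuous_emb.tendsto b).comp hv)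
  have hs_ev : ∀ᶠ n in atTop, orient (emb (u n)) (emb (v n)) (emb s) < 0 :=
    (((continuous_orient _).tendsto _).comp hlim).eventually (gt_mem_nhds hs')
  have ht_ev : ∀ᶠ n in atTop, 0 < orient (emb (u n)) (emb (v n)) (emb t) :=
    (((continuous_orient _).tendsto _).comp hlim).eventually (lt_mem_nhds ht')
  obtain ⟨n, hsn, htn, hin⟩ :=
    (hs_ev.and (ht_ev.and (hφ.tendsto_atTop.eventually_gt_atTop i))).exists
  obtain ⟨z, hz, hz'⟩ := segment_inter_nonempty_of_orient (norm_emb _) (norm_emb _)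
    (norm_emb _).le (norm_emb _).le hsn htn
  exact hin.ne (hw.eq_of_mem_CH (chord_subset_CH hs ht hz)
    (chord_subset_CH (hmem n).1 (hmem n).2 hz'))

lemma critical_endpoint_not_mem (hw : Wandering d N T) (hd : 0 < d) (hN : 2 ≤ N) (hab : a ≠ b)
    (hcr : fd d a = fd d b) (hφ : StrictMono φ)
    (hmem : ∀ n, u n ∈ (fd d)^[φ n] '' T ∧ v n ∈ (fd d)^[φ n] '' T)
    (hu : Tendsto u atTop (𝓝 a)) (hv : Tendsto v atTop (𝓝 b)) (i : ℕ) :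
    a ∉ (fd d)^[i] '' T := by
  intro ha
  obtain ⟨α, rfl⟩ := QuotientAddGroup.mk_surjective a
  obtain ⟨β, hβ, rfl⟩ := exists_coe_eq_mem_Ioo hab.symm
  obtain ⟨x, hx, hxlim⟩ := exists_lift_tendsto hu
  obtain ⟨y, hy, hylim⟩ := exists_lift_tendsto hv
  obtain rfl : u = fun n => (x n : S1) := funext fun n => (hx n).symm
  obtain rfl : v = fun n => (y n : S1) := funext fun n => (hy n).symm
  have hfa := fd_mem_iterate_succ_image ha
  obtain ⟨s, hs, hsne⟩ := Set.exists_ne_of_one_lt_ncard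
    (by rw [(hw (i + 1) 0).1]; omega) (fd d α)
  simp only [fd_coe] at hsne hfa hcr
  obtain ⟨σ, hσ, rfl⟩ := exists_coe_eq_mem_Ioo hsne
  have hdisj : Pairwise fun m n => Disjoint (chord (x m) (y m)) (chord (x n) (y n)) :=
    fun m n hmn => ((hw (φ m) (φ n)).2 (hφ.injective.ne hmn)).mono
      (chord_subset_CH (hmem m).1 (hmem m).2) (chord_subset_CH (hmem n).1 (hmem n).2)
  set ρ := min (σ - d * α) (d * α + 1 - σ) / d
  have hρ : 0 < ρ :=
    div_pos (lt_min (by linarith [hσ.1]) (by linarith [hσ.2])) (by exact_mod_cast hd)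
  have hsmall : ∀ᶠ n in atTop, |x n - α| < ρ ∧ |y n - β| < ρ :=
    (Metric.tendsto_nhds.mp hxlim ρ hρ).and (Metric.tendsto_nhds.mp hylim ρ hρ)
  obtain ⟨n, hsign, ⟨hxn, hyn⟩, hin⟩ :=
    ((eventually_mul_nonpos_of_pairwise_disjoint hβ hxlim hylim hdisj).and
      (hsmall.and (hφ.tendsto_atTop.eventually_gt_atTop i))).exists
  obtain ⟨z, hz, hz'⟩ := chord_fd_inter_nonempty hd hcr hσ hxn hyn hsign
  have := hw.eq_of_mem_CH (chord_subset_CH hfa hs hz')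
    (chord_subset_CH (fd_mem_iterate_succ_image (hmem n).1)
      (fd_mem_iterate_succ_image (hmem n).2) hz)
  omega

end Wandering

/-- every critical leaf of a wandering N-gon is disjoint from every
polygon CH(T_i). -/
theorem stmt12 (d N : ℕ) (hd : 2 ≤ d) (hN : 3 ≤ N) (T : Set S1)
    (hw : Wandering d N T) (a b : S1) (hab : a ≠ b)
    (hcr : fd d a = fd d b) (hleaf : InLimitSet d T a b) :
    ∀ i : ℕ, Disjoint (chord a b) (CH ((fd d)^[i] '' T)) := by
  intro i
  obtain ⟨φ, hφ, u, v, hmem, hu, hv⟩ := hleaf.exists_tendsto hab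
  have ha := hw.critical_endpoint_not_mem (by omega) (by omega) hab hcr hφ hmem hu hv i
  have hb := hw.critical_endpoint_not_mem (by omega) (by omega) hab.symm hcr.symm hφ
    (fun n => (hmem n).symm) hv hu i
  have hoff : ∀ s ∈ (fd d)^[i] '' T, orient (emb a) (emb b) (emb s) ≠ 0 := fun s hs h0 => by
    rcases eq_or_eq_of_orient_eq_zero (norm_emb a) (norm_emb b) (norm_emb s)
      (emb_injective.ne hab) h0 with h | h
    · exact ha (emb_injective h ▸ hs)
    · exact hb (emb_injective h ▸ hs)
  by_cases hneg : ∃ s ∈ (fd d)^[i] '' T, orient (emb a) (emb b) (emb s) < 0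
  · obtain ⟨s, hs, hs'⟩ := hneg
    exact disjoint_chord_CH_of_orient_neg fun t ht =>
      (hw.orient_nonpos_of_orient_neg hφ hmem hu hv hs ht hs').lt_of_ne (hoff t ht)
  · simp only [not_exists, not_and, not_lt] at hneg
    rw [chord_comm]
    refine disjoint_chord_CH_of_orient_neg fun t ht => ?_
    rw [orient_swap]
    exact neg_neg_of_pos ((hneg t ht).lt_of_ne' (hoff t ht))
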